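/- arXiv:0705.3249 — 4 statements merged into one kernel-verified Lean document; each statement's English description precedes it below -/
import Mathlib

section
/- Let G, H, K be groups acting on sets X, Y, Z respectively, and let (φ,f) : H⋉Y → K⋉Z and (ψ,w) : G⋉X → K⋉Z be equivariant maps. Let P be the category (the weak fibre product of the translation groupoids) whose objects are the triples (y, k, x) ∈ Y × K × X with k•f(y) = w(x), and whose morphisms (y, k, x) → (y', k', x') are the pairs (h, g) ∈ H × G with h•y = y', g•x = x', and k'·φ(h) = ψ(g)·k in K. Then the rule (g,h)•(y, k, x) := (h•y, ψ(g)·k·φ(h)⁻¹, g•x) is a well-defined action of the group G×H on the object set P₀ of P, and P is isomorphic as a category to the translation groupoid (G×H)⋉P₀, via the identity on objects and sending the morphism (h,g) to the morphism given by the group element (g,h); under this isomorphism the two projection functors from P to G⋉X and to H⋉Y become the equivariant maps (pr_G, (y,k,x) ↦ x) and (pr_H, (y,k,x) ↦ y), whose group homomorphisms are the projections of G×H onto G and H. -/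
/-- An equivariant map `(φ, f) : G⋉X → H⋉Y` between translation groupoids is *fully
faithful* if for all `x, x' ∈ X` and `h ∈ H` with `h • f x = f x'` there is a unique
`g ∈ G` with `φ g = h` and `g • x = x'`. -/
def IsFullyFaithful {G H : Type*} [Group G] [Group H] {X Y : Type*}
    [MulAction G X] [MulAction H Y] (φ : G →* H) (f : X → Y) : Prop :=
  ∀ (x x' : X) (h : H), h • f x = f x' → ∃! g : G, φ g = h ∧ g • x = x'

/-- An equivariant map with underlying map `f : X → Y` into an `H`-set `Y` is
*essentially surjective* if every `y ∈ Y` is of the form `h • f x`. -/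
def IsEssSurj {H : Type*} [Group H] {X Y : Type*} [MulAction H Y] (f : X → Y) : Prop :=
  ∀ y : Y, ∃ (x : X) (h : H), h • f x = y

section Fib

variable {G H K : Type*} [Group G] [Group H] [Group K]
  {X Y Z : Type*} [MulAction G X] [MulAction H Y] [MulAction K Z]

/-- The object set `P₀` of the weak fibre product of `(φ, f) : H⋉Y → K⋉Z` and
`(ψ, w) : G⋉X → K⋉Z`: triples `(y, k, x)` with `k • f y = w x`. -/
def FibObj (φ : H →* K) (f : Y → Z) (ψ : G →* K) (w : X → Z) : Type _ :=
  { t : Y × K × X // t.2.1 • f t.1 = w t.2.2 }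

/-- The action of `G × H` on `P₀`:
`(g, h) • (y, k, x) = (h • y, ψ g * k * (φ h)⁻¹, g • x)`. -/
def fibAction (φ : H →* K) (f : Y → Z) (ψ : G →* K) (w : X → Z)
    (hf : ∀ (h : H) (y : Y), f (h • y) = φ h • f y)
    (hw : ∀ (g : G) (x : X), w (g • x) = ψ g • w x) :
    MulAction (G × H) (FibObj φ f ψ w) where
  smul p t := ⟨(p.2 • t.1.1, ψ p.1 * t.1.2.1 * (φ p.2)⁻¹, p.1 • t.1.2.2), by
    show (ψ p.1 * t.1.2.1 * (φ p.2)⁻¹) • f (p.2 • t.1.1) = w (p.1 • t.1.2.2)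
    rw [hf, hw, ← t.2, smul_smul, smul_smul]
    congr 1
    group⟩
  one_smul t := by
    apply Subtype.ext
    show ((1 : G × H).2 • t.1.1, ψ (1 : G × H).1 * t.1.2.1 * (φ (1 : G × H).2)⁻¹,
      (1 : G × H).1 • t.1.2.2) = t.1
    simp
  mul_smul p q t := by
    apply Subtype.ext
    show ((p * q).2 • t.1.1, ψ (p * q).1 * t.1.2.1 * (φ (p * q).2)⁻¹,
      (p * q).1 • t.1.2.2) = _
    refine Prod.ext ?_ (Prod.ext ?_ ?_)
    · show (p.2 * q.2) • t.1.1 = p.2 • q.2 • t.1.1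
      rw [mul_smul]
    · show ψ (p.1 * q.1) * t.1.2.1 * (φ (p.2 * q.2))⁻¹
        = ψ p.1 * (ψ q.1 * t.1.2.1 * (φ q.2)⁻¹) * (φ p.2)⁻¹
      rw [map_mul, map_mul, mul_inv_rev]
      group
    · show (p.1 * q.1) • t.1.2.2 = p.1 • q.1 • t.1.2.2
      rw [mul_smul]

end Fib

open CategoryTheory

section TransGpd

/-- The translation groupoid `G⋉X` of a `G`-set `X`: objects are the elements of `X`. -/
def TransGpd (G : Type*) [Group G] (X : Type*) [MulAction G X] : Type _ := X

instance (G : Type*) [Group G] (X : Type*) [MulAction G X] :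
    MulAction G (TransGpd G X) :=
  inferInstanceAs (MulAction G X)

/-- Morphisms `x → y` in `G⋉X` are the `g ∈ G` with `g • x = y`; composition is group
multiplication. -/
instance TransGpd.instCategory (G : Type*) [Group G] (X : Type*) [MulAction G X] :
    Category (TransGpd G X) where
  Hom x y := { g : G // g • x = y }
  id x := ⟨1, one_smul G x⟩
  comp m m' := ⟨m'.1 * m.1, by rw [mul_smul, m.2, m'.2]⟩
  id_comp m := Subtype.ext (mul_one m.1)
  comp_id m := Subtype.ext (one_mul m.1)
  assoc m m' m'' := Subtype.ext (mul_assoc m''.1 m'.1 m.1).symm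

/-- The functor `G⋉X → H⋉Y` induced by an equivariant map `(φ, f)`. -/
def eqvFunctor {G H : Type*} [Group G] [Group H] {X Y : Type*}
    [MulAction G X] [MulAction H Y] (φ : G →* H) (f : X → Y)
    (hf : ∀ (g : G) (x : X), f (g • x) = φ g • f x) :
    TransGpd G X ⥤ TransGpd H Y where
  obj x := f x
  map m := ⟨φ m.1, by exact (hf m.1 _).symm.trans (congrArg f m.2)⟩
  map_id x := Subtype.ext (map_one φ)
  map_comp m m' := Subtype.ext (map_mul φ _ _)

end TransGpd

section FibCat

variable {G H K : Type*} [Group G] [Group H] [Group K]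
  {X Y Z : Type*} [MulAction G X] [MulAction H Y] [MulAction K Z]

/-- The weak fibre product category `P` of `(φ, f) : H⋉Y → K⋉Z` and
`(ψ, w) : G⋉X → K⋉Z`: objects are triples `(y, k, x)` with `k • f y = w x`, and
morphisms `(y, k, x) → (y', k', x')` are pairs `(h, g)` with `h • y = y'`,
`g • x = x'` and `k' * φ h = ψ g * k`. -/
instance FibObj.instCategory (φ : H →* K) (f : Y → Z) (ψ : G →* K) (w : X → Z) :
    Category (FibObj φ f ψ w) where
  Hom p p' := { m : H × G // m.1 • p.1.1 = p'.1.1 ∧ m.2 • p.1.2.2 = p'.1.2.2 ∧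
      p'.1.2.1 * φ m.1 = ψ m.2 * p.1.2.1 }
  id p := ⟨(1, 1), by simp⟩
  comp := fun {p p' p''} m m' => ⟨(m'.1.1 * m.1.1, m'.1.2 * m.1.2), by
    obtain ⟨h1, h2, h3⟩ := m.2
    obtain ⟨h1', h2', h3'⟩ := m'.2
    refine ⟨?_, ?_, ?_⟩
    · rw [mul_smul, h1, h1']
    · rw [mul_smul, h2, h2']
    · calc p''.1.2.1 * φ (m'.1.1 * m.1.1)
          = (p''.1.2.1 * φ m'.1.1) * φ m.1.1 := by rw [map_mul, mul_assoc]
        _ = (ψ m'.1.2 * p'.1.2.1) * φ m.1.1 := by rw [h3']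
        _ = ψ m'.1.2 * (p'.1.2.1 * φ m.1.1) := by rw [mul_assoc]
        _ = ψ m'.1.2 * (ψ m.1.2 * p.1.2.1) := by rw [h3]
        _ = ψ (m'.1.2 * m.1.2) * p.1.2.1 := by rw [map_mul, mul_assoc]⟩
  id_comp m := Subtype.ext (Prod.ext (mul_one m.1.1) (mul_one m.1.2))
  comp_id m := Subtype.ext (Prod.ext (one_mul m.1.1) (one_mul m.1.2))
  assoc m m' m'' := Subtype.ext
    (Prod.ext (mul_assoc m''.1.1 m'.1.1 m.1.1).symm (mul_assoc m''.1.2 m'.1.2 m.1.2).symm)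

end FibCat

/-- Let `(φ, f) : H⋉Y → K⋉Z` and `(ψ, w) : G⋉X → K⋉Z` be equivariant maps, and let `P`
be the weak fibre product category, with object set `P₀`.  Then the rule
`(g, h) • (y, k, x) = (h • y, ψ g * k * (φ h)⁻¹, g • x)` is a well-defined `G × H`-action
on `P₀` (this is the content of `fibAction`), and `P` is isomorphic as a category to the
translation groupoid `(G×H)⋉P₀` via the identity on objects, sending a morphism `(h, g)`
to the group element `(g, h)`; under this isomorphism the two projection functors from
`P` to `G⋉X` and `H⋉Y` become the equivariant maps `(pr_G, (y,k,x) ↦ x)` and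
`(pr_H, (y,k,x) ↦ y)` whose group homomorphisms are the projections of `G × H`. -/
theorem stmt_0 {G H K : Type*} [Group G] [Group H] [Group K]
    {X Y Z : Type*} [MulAction G X] [MulAction H Y] [MulAction K Z]
    (φ : H →* K) (f : Y → Z) (ψ : G →* K) (w : X → Z)
    (hf : ∀ (h : H) (y : Y), f (h • y) = φ h • f y)
    (hw : ∀ (g : G) (x : X), w (g • x) = ψ g • w x) :
    letI := fibAction φ f ψ w hf hw
    -- the action of G × H on P₀ is given by the stated rule
    (∀ (g : G) (h : H) (t : FibObj φ f ψ w),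
        ((g, h) • t).1 = (h • t.1.1, ψ g * t.1.2.1 * (φ h)⁻¹, g • t.1.2.2))
    -- P is isomorphic to the translation groupoid (G × H) ⋉ P₀ :
    ∧ ∃ F : FibObj φ f ψ w ⥤ TransGpd (G × H) (FibObj φ f ψ w),
        -- F is the identity on objects
        (∀ t : FibObj φ f ψ w, F.obj t = t)
        -- F sends the morphism (h, g) to the group element (g, h)
        ∧ (∀ (t t' : FibObj φ f ψ w) (m : t ⟶ t'), (F.map m).1 = (m.1.2, m.1.1))
        -- F is bijective on morphisms (hence an isomorphism of categories)
        ∧ (∀ t t' : FibObj φ f ψ w,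
            Function.Bijective (fun m : t ⟶ t' => F.map m))
        -- composing F with the equivariant map (pr_G, (y,k,x) ↦ x) gives the
        -- projection functor P → G⋉X ...
        ∧ (∀ t : FibObj φ f ψ w,
            (F ⋙ eqvFunctor (MonoidHom.fst G H)
              (fun t : FibObj φ f ψ w => t.1.2.2) (fun _ _ => rfl)).obj t = t.1.2.2)
        ∧ (∀ (t t' : FibObj φ f ψ w) (m : t ⟶ t'),
            ((F ⋙ eqvFunctor (MonoidHom.fst G H)
              (fun t : FibObj φ f ψ w => t.1.2.2) (fun _ _ => rfl)).map m).1 = m.1.2)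
        -- ... and with (pr_H, (y,k,x) ↦ y) the projection functor P → H⋉Y
        ∧ (∀ t : FibObj φ f ψ w,
            (F ⋙ eqvFunctor (MonoidHom.snd G H)
              (fun t : FibObj φ f ψ w => t.1.1) (fun _ _ => rfl)).obj t = t.1.1)
        ∧ (∀ (t t' : FibObj φ f ψ w) (m : t ⟶ t'),
            ((F ⋙ eqvFunctor (MonoidHom.snd G H)
              (fun t : FibObj φ f ψ w => t.1.1) (fun _ _ => rfl)).map m).1 = m.1.1) := by
  
  letI := fibAction φ f ψ w hf hw
  refine ⟨fun g h t => rfl, ?_⟩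
  refine ⟨{ obj := fun t => t
            map := fun {t t'} m => ⟨(m.1.2, m.1.1), ?_⟩
            map_id := fun t => Subtype.ext rfl
            map_comp := fun m m' => Subtype.ext rfl }, ?_, ?_, ?_, ?_, ?_, ?_, ?_⟩
  · obtain ⟨h1, h2, h3⟩ := m.2
    apply Subtype.ext
    show (m.1.1 • t.1.1, ψ m.1.2 * t.1.2.1 * (φ m.1.1)⁻¹, m.1.2 • t.1.2.2) = t'.1
    refine Prod.ext h1 (Prod.ext ?_ h2)
    show ψ m.1.2 * t.1.2.1 * (φ m.1.1)⁻¹ = t'.1.2.1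
    rw [← h3]
    group
  · intro t; rfl
  · intro t t' m; rfl
  · intro t t'
    constructor
    · intro m m' hmm
      apply Subtype.ext
      have := congrArg Subtype.val hmm
      have h1 := congrArg Prod.fst this
      have h2 := congrArg Prod.snd this
      exact Prod.ext h2 h1
    · rintro ⟨⟨g, h⟩, hp⟩
      have hp' := congrArg Subtype.val hp
      have e1 : h • t.1.1 = t'.1.1 := congrArg (fun a => a.1) hp'
      have e2 : ψ g * t.1.2.1 * (φ h)⁻¹ = t'.1.2.1 := congrArg (fun a => a.2.1) hp'
      have e3 : g • t.1.2.2 = t'.1.2.2 := congrArg (fun a => a.2.2) hp'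
      refine ⟨⟨(h, g), e1, e3, ?_⟩, ?_⟩
      · rw [← e2]; group
      · apply Subtype.ext; rfl
  · intro t; rfl
  · intro t t' m; rfl
  · intro t; rfl
  · intro t t' m; rfl
end

section
/- Let G, H, K be groups acting on sets X, Y, Z respectively, let (φ,f) : H⋉Y → K⋉Z be an equivariant map and let (ψ,w) : G⋉X → K⋉Z be an equivariant essential equivalence. Let P₀ = {(y, k, x) ∈ Y × K × X : k•f(y) = w(x)} with the G×H-action (g,h)•(y,k,x) = (h•y, ψ(g)·k·φ(h)⁻¹, g•x). Then the equivariant map (ξ, v) : (G×H)⋉P₀ → H⋉Y, where ξ : G×H → H is the projection and v(y,k,x) = y, is an essential equivalence: it is fully faithful and essentially surjective. -/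
/-- Given an equivariant map `(φ, f) : H⋉Y → K⋉Z` and an equivariant essential
equivalence `(ψ, w) : G⋉X → K⋉Z`, the projection `(ξ, v) : (G×H)⋉P₀ → H⋉Y` from the
weak fibre product — where `ξ : G×H → H` is the projection and `v (y, k, x) = y` — is
an essential equivalence: it is equivariant, fully faithful and essentially
surjective. -/
theorem stmt_1 {G H K : Type*} [Group G] [Group H] [Group K]
    {X Y Z : Type*} [MulAction G X] [MulAction H Y] [MulAction K Z]
    (φ : H →* K) (f : Y → Z) (ψ : G →* K) (w : X → Z)
    (hf : ∀ (h : H) (y : Y), f (h • y) = φ h • f y)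
    (hw : ∀ (g : G) (x : X), w (g • x) = ψ g • w x)
    (hff : IsFullyFaithful ψ w) (hes : IsEssSurj (H := K) w) :
    letI := fibAction φ f ψ w hf hw
    (∀ (p : G × H) (t : FibObj φ f ψ w), (p • t).1.1 = p.2 • t.1.1)
    ∧ IsFullyFaithful (MonoidHom.snd G H) (fun t : FibObj φ f ψ w => t.1.1)
    ∧ IsEssSurj (H := H) (fun t : FibObj φ f ψ w => t.1.1) := by
  refine ⟨fun p t => rfl, ?_, ?_⟩
  · rintro ⟨⟨y, k, x⟩, ht⟩ ⟨⟨y', k', x'⟩, ht'⟩ h (hy : h • y = y')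
    have hz : (k' * φ h * k⁻¹) • w x = w x' := by
      have : f y' = φ h • f y := by rw [← hy, hf]
      simp only [mul_smul, inv_smul_eq_iff, ← ht, ← ht', this, inv_smul_smul]
    obtain ⟨g, ⟨hg1, hg2⟩, hgu⟩ := hff x x' (k' * φ h * k⁻¹) hz
    refine ⟨(g, h), ⟨rfl, ?_⟩, ?_⟩
    · apply Subtype.ext
      show (h • y, ψ g * k * (φ h)⁻¹, g • x) = (y', k', x')
      refine Prod.ext hy (Prod.ext ?_ hg2)
      rw [hg1]; group
    · rintro ⟨g', h'⟩ ⟨(hh' : h' = h), heq⟩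
      have heq' : (h' • y, ψ g' * k * (φ h')⁻¹, g' • x) = (y', k', x') :=
        congrArg Subtype.val heq
      have h2 : ψ g' * k * (φ h')⁻¹ = k' := (congrArg (·.2.1) heq')
      have h3 : g' • x = x' := (congrArg (·.2.2) heq')
      have : ψ g' = k' * φ h * k⁻¹ := by
        rw [← h2, hh']; group
      have := hgu g' ⟨this, h3⟩
      simp [this, hh']
  · intro y
    obtain ⟨x, k, hk⟩ := hes (f y)
    exact ⟨⟨(y, k⁻¹, x), by simpa [inv_smul_eq_iff] using hk.symm⟩, 1, one_smul _ _⟩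
end

section
/- Let G be a group acting on a set X and let K be a normal subgroup of G whose restricted action on X is free. Let x ∈ X, and let L and L' be subgroups of G each of which fixes x (every element of L and of L' fixes x). If L and L' have the same image under the quotient homomorphism G → G/K, then L = L'. -/
/-! Two elements of `G` fixing `x` and having the same image in `G ⧸ K` differ by an element of
`K` fixing `x`, which is trivial by freeness. So the quotient map is injective on the stabilizer
of `x`, and subgroups of the stabilizer are determined by their images. -/

section

variable {G X : Type*} [Group G] [MulAction G X] {K : Subgroup G} {x : X}

theorem eq_of_inv_mul_mem_of_smul_eq (hfree : ∀ k : K, (k : G) • x = x → k = 1) {g g' : G}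
    (hg : g • x = x) (hg' : g' • x = x) (hK : g⁻¹ * g' ∈ K) : g = g' := by
  have hfix : (g⁻¹ * g') • x = x := by rw [mul_smul, hg', inv_smul_eq_iff, hg]
  have hone : g⁻¹ * g' = 1 := congrArg Subtype.val (hfree ⟨_, hK⟩ hfix)
  exact inv_mul_eq_one.mp hone

theorem le_of_map_mk'_le_of_smul_eq [K.Normal] (hfree : ∀ k : K, (k : G) • x = x → k = 1)
    {L L' : Subgroup G} (hL : ∀ g ∈ L, g • x = x) (hL' : ∀ g ∈ L', g • x = x)
    (him : L.map (QuotientGroup.mk' K) ≤ L'.map (QuotientGroup.mk' K)) : L ≤ L' := by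
  intro g hg
  obtain ⟨g', hg', hmk⟩ := him (Subgroup.mem_map_of_mem _ hg)
  have hK : g'⁻¹ * g ∈ K := QuotientGroup.eq.mp hmk
  rwa [← eq_of_inv_mul_mem_of_smul_eq hfree (hL' g' hg') (hL g hg) hK]

end

/-- Let `K ⊴ G` be a normal subgroup whose restricted action on the `G`-set `X` is
free, and let `x ∈ X`.  If `L` and `L'` are subgroups of `G` each of which fixes `x`,
and `L` and `L'` have the same image under the quotient homomorphism `G → G/K`, then
`L = L'`. -/
theorem stmt_8 {G : Type*} [Group G] {X : Type*} [MulAction G X]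
    (K : Subgroup G) [K.Normal]
    (hfree : ∀ (k : K) (x : X), (k : G) • x = x → k = 1)
    (x : X) (L L' : Subgroup G)
    (hL : ∀ g ∈ L, g • x = x) (hL' : ∀ g ∈ L', g • x = x)
    (him : L.map (QuotientGroup.mk' K) = L'.map (QuotientGroup.mk' K)) :
    L = L' :=
  le_antisymm (le_of_map_mk'_le_of_smul_eq (hfree · x) hL hL' him.le)
    (le_of_map_mk'_le_of_smul_eq (hfree · x) hL' hL him.ge)
end

section
/- Let G and H be groups acting on sets X and Y respectively, let K be a groupoid, let υ : K → G⋉X be an equivalence of categories, and let φ : K → H⋉Y be any functor. Then there exist a (G×H)-set Z, an equivariant map ω = (pr_G, w) : (G×H)⋉Z → G⋉X whose group homomorphism is the projection pr_G : G×H → G, an equivariant map ψ = (pr_H, u) : (G×H)⋉Z → H⋉Y whose group homomorphism is the projection pr_H : G×H → H, and a functor θ : K → (G×H)⋉Z which is an equivalence of categories, such that ω ∘ θ = υ and ψ ∘ θ = φ as functors. Consequently ω is fully faithful and essentially surjective. -/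
open CategoryTheory

/-- A replacement of a generalized map, given by a span of functors
`G⋉X ←υ− K −φ→ H⋉Y` whose left leg is an equivalence, by a span of equivariant maps
`G⋉X ←ω− (G×H)⋉Z −ψ→ H⋉Y`: a `(G×H)`-set `Z`, equivariant maps
`ω = (pr_G, w) : (G×H)⋉Z → G⋉X` and `ψ = (pr_H, u) : (G×H)⋉Z → H⋉Y` whose group
homomorphisms are the two projections of `G×H`, and an equivalence of categories
`θ : K → (G×H)⋉Z` with `ω ∘ θ = υ` and `ψ ∘ θ = φ`; moreover `ω` is fully faithful
and essentially surjective. -/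
structure Replacement {G H : Type} [Group G] [Group H] {X Y : Type}
    [MulAction G X] [MulAction H Y] {K : Type} [Groupoid K]
    (υ : K ⥤ TransGpd G X) (φ : K ⥤ TransGpd H Y) where
  /-- the underlying set of the replacing translation groupoid -/
  Z : Type
  /-- the action of `G × H` on `Z` -/
  [act : MulAction (G × H) Z]
  /-- the underlying map of `ω` -/
  w : Z → X
  /-- `w` is equivariant along the projection `pr_G : G × H → G` -/
  hw : ∀ (p : G × H) (z : Z), w (p • z) = MonoidHom.fst G H p • w z
  /-- the underlying map of `ψ` -/
  u : Z → Y
  /-- `u` is equivariant along the projection `pr_H : G × H → H` -/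
  hu : ∀ (p : G × H) (z : Z), u (p • z) = MonoidHom.snd G H p • u z
  /-- the comparison functor `θ : K → (G×H)⋉Z` -/
  θ : K ⥤ TransGpd (G × H) Z
  /-- `θ` is an equivalence of categories -/
  θ_equiv : θ.IsEquivalence
  /-- `ω ∘ θ = υ` as functors -/
  comm_w : θ ⋙ eqvFunctor (MonoidHom.fst G H) w hw = υ
  /-- `ψ ∘ θ = φ` as functors -/
  comm_u : θ ⋙ eqvFunctor (MonoidHom.snd G H) u hu = φ
  /-- consequently, the equivariant map `ω` is fully faithful -/
  ω_ff : IsFullyFaithful (MonoidHom.fst G H) w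
  /-- and essentially surjective -/
  ω_es : IsEssSurj (H := G) w

/-!
Take `Z` to be `G × H × Ob K` modulo `(g' * υ m, h' * φ m, k) ~ (g', h', k')` for
`m : k ⟶ k'`, with `G × H` acting on the first two coordinates, `θ k = [1, 1, k]`,
`w [g, h, k] = g • υ k` and `u [g, h, k] = h • φ k`. The relation is exactly what makes `θ`
full and every `[g, h, k]` isomorphic to `θ k`; `θ` is faithful because `ω ∘ θ = υ` is. Then
`θ` is an equivalence, so `ω` is one too, which for an equivariant map means fully faithful
and essentially surjective.
-/

namespace TransGpd

variable {G X : Type*} [Group G] [MulAction G X]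

@[simp]
lemma comp_val {x y z : TransGpd G X} (f : x ⟶ y) (g : y ⟶ z) : (f ≫ g).1 = g.1 * f.1 := rfl

@[simp]
lemma id_val (x : TransGpd G X) : (𝟙 x : x ⟶ x).1 = 1 := rfl

@[simp]
lemma eqToHom_val {x y : TransGpd G X} (h : x = y) : (eqToHom h).1 = 1 := by
  subst h
  rfl

def isoOfHom {x y : TransGpd G X} (f : x ⟶ y) : x ≅ y where
  hom := f
  inv := ⟨f.1⁻¹, inv_smul_eq_iff.mpr f.2.symm⟩
  hom_inv_id := Subtype.ext (inv_mul_cancel f.1)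
  inv_hom_id := Subtype.ext (mul_inv_cancel f.1)

lemma functor_ext {C : Type*} [Category C] {F F' : C ⥤ TransGpd G X}
    (h_obj : ∀ c, F.obj c = F'.obj c) (h_map : ∀ {c c'} (m : c ⟶ c'), (F.map m).1 = (F'.map m).1) :
    F = F' :=
  CategoryTheory.Functor.ext h_obj fun _ _ m => Subtype.ext (by simp [h_map m])

lemma map_inv_val {K : Type*} [Groupoid K] (F : K ⥤ TransGpd G X) {k k' : K} (m : k ⟶ k') :
    (F.map (Groupoid.inv m)).1 = (F.map m).1⁻¹ := by
  have h := congrArg (fun f => (F.map f).1) (Groupoid.comp_inv m)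
  simp only [F.map_comp, F.map_id, comp_val, id_val] at h
  exact eq_inv_of_mul_eq_one_left h

end TransGpd

section EquivariantMap

variable {G H X Y : Type*} [Group G] [Group H] [MulAction G X] [MulAction H Y]
  {φ : G →* H} {f : X → Y} (hf : ∀ (g : G) (x : X), f (g • x) = φ g • f x)

lemma IsFullyFaithful.of_full_faithful [(eqvFunctor φ f hf).Full]
    [(eqvFunctor φ f hf).Faithful] : IsFullyFaithful φ f := by
  intro x x' h hh
  let F := eqvFunctor φ f hf
  obtain ⟨m, hm⟩ := F.map_surjective (⟨h, hh⟩ : F.obj x ⟶ F.obj x')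
  refine ⟨m.1, ⟨congrArg Subtype.val hm, m.2⟩, fun g ⟨hg, hgx⟩ => ?_⟩
  have : m = ⟨g, hgx⟩ := F.map_injective (Subtype.ext ((congrArg Subtype.val hm).trans hg.symm))
  exact (congrArg Subtype.val this).symm

lemma IsEssSurj.of_essSurj [(eqvFunctor φ f hf).EssSurj] : IsEssSurj (H := H) f := by
  intro y
  let e := (eqvFunctor φ f hf).objObjPreimageIso (y : TransGpd H Y)
  exact ⟨_, e.hom.1, e.hom.2⟩

end EquivariantMap

section

variable {G H X Y K : Type*} [Group G] [Group H] [MulAction G X] [MulAction H Y] [Groupoid K]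
  (υ : K ⥤ TransGpd G X) (φ : K ⥤ TransGpd H Y)

def replSetoid : Setoid (G × H × K) where
  r a b := ∃ m : a.2.2 ⟶ b.2.2, a.1 = b.1 * (υ.map m).1 ∧ a.2.1 = b.2.1 * (φ.map m).1
  iseqv := by
    refine ⟨fun a => ⟨𝟙 a.2.2, by simp, by simp⟩, ?_, ?_⟩
    · rintro a b ⟨m, h₁, h₂⟩
      refine ⟨Groupoid.inv m, ?_, ?_⟩ <;>
        simp only [TransGpd.map_inv_val, h₁, h₂, mul_inv_cancel_right]
    · rintro a b c ⟨m, h₁, h₂⟩ ⟨m', h₁', h₂'⟩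
      exact ⟨m ≫ m', by simp [h₁, h₁', mul_assoc], by simp [h₂, h₂', mul_assoc]⟩

def ReplSet : Type _ := Quotient (replSetoid υ φ)

namespace ReplSet

def mk (a : G × H × K) : ReplSet υ φ := Quotient.mk (replSetoid υ φ) a

instance : MulAction (G × H) (ReplSet υ φ) where
  smul p := Quotient.map (fun a => (p.1 * a.1, p.2 * a.2.1, a.2.2)) fun _ _ ⟨m, h₁, h₂⟩ =>
    ⟨m, by simp only [h₁, mul_assoc], by simp only [h₂, mul_assoc]⟩
  one_smul := by
    rintro ⟨a⟩
    exact congrArg (mk υ φ) (by simp)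
  mul_smul p q := by
    rintro ⟨a⟩
    exact congrArg (mk υ φ) (by simp [mul_assoc])

def w : ReplSet υ φ → X :=
  Quotient.lift (fun a => a.1 • υ.obj a.2.2) fun a b ⟨m, h₁, _⟩ => by
    rw [h₁, mul_smul, (υ.map m).2]

def u : ReplSet υ φ → Y :=
  Quotient.lift (fun a => a.2.1 • φ.obj a.2.2) fun a b ⟨m, _, h₂⟩ => by
    rw [h₂, mul_smul, (φ.map m).2]

lemma w_smul (p : G × H) (z : ReplSet υ φ) : w υ φ (p • z) = MonoidHom.fst G H p • w υ φ z := by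
  induction z using Quotient.inductionOn
  exact mul_smul _ _ _

lemma u_smul (p : G × H) (z : ReplSet υ φ) : u υ φ (p • z) = MonoidHom.snd G H p • u υ φ z := by
  induction z using Quotient.inductionOn
  exact mul_smul _ _ _

def θ : K ⥤ TransGpd (G × H) (ReplSet υ φ) where
  obj k := mk υ φ (1, 1, k)
  map m := ⟨((υ.map m).1, (φ.map m).1), Quotient.sound ⟨m, by simp, by simp⟩⟩
  map_id k := Subtype.ext (Prod.ext (congrArg Subtype.val (υ.map_id k))
    (congrArg Subtype.val (φ.map_id k)))
  map_comp m m' := Subtype.ext (Prod.ext (congrArg Subtype.val (υ.map_comp m m'))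
    (congrArg Subtype.val (φ.map_comp m m')))

lemma θ_comp_w : θ υ φ ⋙ eqvFunctor (MonoidHom.fst G H) (w υ φ) (w_smul υ φ) = υ :=
  TransGpd.functor_ext (fun _ => one_smul G _) fun _ => rfl

lemma θ_comp_u : θ υ φ ⋙ eqvFunctor (MonoidHom.snd G H) (u υ φ) (u_smul υ φ) = φ :=
  TransGpd.functor_ext (fun _ => one_smul H _) fun _ => rfl

instance θ_full : (θ υ φ).Full where
  map_surjective p := by
    obtain ⟨m, h₁, h₂⟩ := Quotient.exact p.2
    exact ⟨m, Subtype.ext (Prod.ext (by simpa [θ] using h₁.symm) (by simpa [θ] using h₂.symm))⟩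

instance θ_essSurj : (θ υ φ).EssSurj where
  mem_essImage z := by
    induction z using Quotient.inductionOn with
    | h a => exact ⟨a.2.2, ⟨TransGpd.isoOfHom ⟨(a.1, a.2.1), congrArg (mk υ φ) (by simp)⟩⟩⟩

instance θ_faithful [υ.Faithful] : (θ υ φ).Faithful := by
  have : (θ υ φ ⋙ eqvFunctor (MonoidHom.fst G H) (w υ φ) (w_smul υ φ)).Faithful := by
    rwa [θ_comp_w]
  exact Functor.Faithful.of_comp _ (eqvFunctor _ _ (w_smul υ φ))

instance θ_isEquivalence [υ.Faithful] : (θ υ φ).IsEquivalence := {}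

instance isEquivalence_eqvFunctor_w [υ.IsEquivalence] :
    (eqvFunctor (MonoidHom.fst G H) (w υ φ) (w_smul υ φ)).IsEquivalence := by
  have : (θ υ φ ⋙ eqvFunctor (MonoidHom.fst G H) (w υ φ) (w_smul υ φ)).IsEquivalence := by
    rwa [θ_comp_w]
  exact Functor.isEquivalence_of_comp_left (θ υ φ) _

end ReplSet

end

/-- Let `G` and `H` be groups acting on sets `X` and `Y`, let `K` be a groupoid,
`υ : K → G⋉X` an equivalence of categories and `φ : K → H⋉Y` any functor.  Then the
generalized map `G⋉X ←υ− K −φ→ H⋉Y` can be replaced by a span of equivariant maps out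
of a translation groupoid for the group `G × H`: there are a `(G×H)`-set `Z`,
equivariant maps `ω = (pr_G, w) : (G×H)⋉Z → G⋉X`, `ψ = (pr_H, u) : (G×H)⋉Z → H⋉Y` and
an equivalence of categories `θ : K → (G×H)⋉Z` with `ω ∘ θ = υ` and `ψ ∘ θ = φ`;
consequently `ω` is fully faithful and essentially surjective. -/
theorem stmt_13 {G H : Type} [Group G] [Group H] {X Y : Type}
    [MulAction G X] [MulAction H Y] {K : Type} [Groupoid K]
    (υ : K ⥤ TransGpd G X) (φ : K ⥤ TransGpd H Y) (hυ : υ.IsEquivalence) :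
    Nonempty (Replacement υ φ) :=
  ⟨⟨ReplSet υ φ, ReplSet.w υ φ, ReplSet.w_smul υ φ, ReplSet.u υ φ, ReplSet.u_smul υ φ,
    ReplSet.θ υ φ, inferInstance, ReplSet.θ_comp_w υ φ, ReplSet.θ_comp_u υ φ,
    .of_full_faithful (ReplSet.w_smul υ φ), .of_essSurj (ReplSet.w_smul υ φ)⟩⟩
end
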